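/- arXiv:2311.10040 — 7 statements merged into one kernel-verified Lean document; each statement's English description precedes it below -/
import Mathlib

section
/- A matrix M whose entries are sets (over finite index sets) is a 'proper block matrix' — i.e., there exist pairwise disjoint row-index sets A_1,...,A_k and pairwise disjoint column-index sets B_1,...,B_k such that M[i,j] is nonempty iff there is ℓ with i ∈ A_ℓ and j ∈ B_ℓ — if and only if M has no 2×2 submatrix with exactly one empty entry. -/
/-- A set-valued matrix is a proper block matrix: there are pairwise disjoint row
sets `A ℓ` and pairwise disjoint column sets `B ℓ` such that the entry `M a b` is
nonempty iff `a ∈ A ℓ` and `b ∈ B ℓ` for some `ℓ`. -/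
def ProperBlockMatrix {ι κ S : Type*} (M : ι → κ → Set S) : Prop :=
  ∃ (k : ℕ) (A : Fin k → Set ι) (B : Fin k → Set κ),
    (∀ i j, i ≠ j → Disjoint (A i) (A j)) ∧
    (∀ i j, i ≠ j → Disjoint (B i) (B j)) ∧
    (∀ a b, (M a b).Nonempty ↔ ∃ ℓ, a ∈ A ℓ ∧ b ∈ B ℓ)

/-!
Call `M` rectangle-closed if whenever `M a b`, `M a b'` and `M a' b` are nonempty, so is
`M a' b'`; for `a ≠ a'`, `b ≠ b'` this is exactly the absence of a `2 × 2` submatrix with one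
empty entry. In a rectangle-closed matrix two rows whose supports share a column have equal
supports, so the distinct row supports are pairwise disjoint. Taking them as the column blocks,
and the rows with a given support as the matching row block, exhibits `M` as a proper block
matrix; there are finitely many blocks because there are finitely many rows.
-/

section

variable {ι κ S : Type*}

def RectangleClosed (M : ι → κ → Set S) : Prop :=
  ∀ a a' b b', (M a b).Nonempty → (M a b').Nonempty → (M a' b).Nonempty → (M a' b').Nonempty

def rowSupport (M : ι → κ → Set S) (a : ι) : Set κ := {b | (M a b).Nonempty}

theorem ProperBlockMatrix.rectangleClosed {M : ι → κ → Set S} (hM : ProperBlockMatrix M) :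
    RectangleClosed M := by
  obtain ⟨k, A, B, hA, hB, hAB⟩ := hM
  intro a a' b b' hab hab' ha'b
  obtain ⟨ℓ, ha, hb⟩ := (hAB a b).1 hab
  obtain ⟨ℓ', ha₂, hb'⟩ := (hAB a b').1 hab'
  obtain ⟨ℓ'', ha', hb₂⟩ := (hAB a' b).1 ha'b
  have hℓ' : ℓ' = ℓ := by_contra fun hne => Set.disjoint_left.1 (hA ℓ' ℓ hne) ha₂ ha
  have hℓ'' : ℓ'' = ℓ := by_contra fun hne => Set.disjoint_left.1 (hB ℓ'' ℓ hne) hb₂ hb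
  exact (hAB a' b').2 ⟨ℓ, hℓ'' ▸ ha', hℓ' ▸ hb'⟩

theorem RectangleClosed.rowSupport_eq {M : ι → κ → Set S} (hM : RectangleClosed M) {a a' : ι}
    {b : κ} (hb : b ∈ rowSupport M a) (hb' : b ∈ rowSupport M a') :
    rowSupport M a = rowSupport M a' :=
  Set.ext fun _ => ⟨fun h => hM a a' b _ hb h hb', fun h => hM a' a b _ hb' h hb⟩

theorem RectangleClosed.properBlockMatrix [Finite ι] {M : ι → κ → Set S}
    (hM : RectangleClosed M) : ProperBlockMatrix M := by
  let e := Finite.equivFin (Set.range (rowSupport M))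
  have block_eq {i j : Fin (Nat.card (Set.range (rowSupport M)))}
      (h : (e.symm i : Set κ) = e.symm j) : i = j :=
    e.symm.injective (Subtype.ext h)
  refine ⟨_, fun ℓ => rowSupport M ⁻¹' {(e.symm ℓ : Set κ)}, fun ℓ => e.symm ℓ, ?_, ?_, ?_⟩
  · refine fun i j hij => Set.disjoint_left.2 fun a hai haj => hij (block_eq ?_)
    rw [← Set.mem_singleton_iff.1 hai, ← Set.mem_singleton_iff.1 haj]
  · refine fun i j hij => Set.disjoint_left.2 fun b hbi hbj => hij (block_eq ?_)
    dsimp only at hbi hbj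
    obtain ⟨a, ha⟩ := (e.symm i).2
    obtain ⟨a', ha'⟩ := (e.symm j).2
    rw [← ha] at hbi ⊢
    rw [← ha'] at hbj ⊢
    exact hM.rowSupport_eq hbi hbj
  · intro a b
    constructor
    · intro hab
      refine ⟨e ⟨rowSupport M a, a, rfl⟩, ?_, ?_⟩ <;> simp only [Equiv.symm_apply_apply]
      exacts [rfl, hab]
    · rintro ⟨ℓ, ha, hb⟩
      dsimp only at ha hb
      rwa [← Set.mem_singleton_iff.1 ha] at hb

theorem rectangleClosed_iff_not_exists {M : ι → κ → Set S} :
    RectangleClosed M ↔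
      ¬ ∃ (a a' : ι) (b b' : κ), a ≠ a' ∧ b ≠ b' ∧
        (M a b).Nonempty ∧ (M a b').Nonempty ∧ (M a' b).Nonempty ∧ ¬ (M a' b').Nonempty := by
  constructor
  · rintro hM ⟨a, a', b, b', -, -, hab, hab', ha'b, ha'b'⟩
    exact ha'b' (hM a a' b b' hab hab' ha'b)
  · intro h a a' b b' hab hab' ha'b
    by_contra ha'b'
    rcases eq_or_ne a a' with rfl | ha
    · exact ha'b' hab'
    rcases eq_or_ne b b' with rfl | hb
    · exact ha'b' ha'b
    exact h ⟨a, a', b, b', ha, hb, hab, hab', ha'b, ha'b'⟩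

end

theorem stmt_0_general {ι κ S : Type*} [Fintype ι] (M : ι → κ → Set S) :
    ProperBlockMatrix M ↔
      ¬ ∃ (a a' : ι) (b b' : κ), a ≠ a' ∧ b ≠ b' ∧
        (M a b).Nonempty ∧ (M a b').Nonempty ∧ (M a' b).Nonempty ∧ ¬ (M a' b').Nonempty := by
  rw [← rectangleClosed_iff_not_exists]
  exact ⟨ProperBlockMatrix.rectangleClosed, RectangleClosed.properBlockMatrix⟩

theorem stmt_0 {ι κ S : Type*} [Fintype ι] [Fintype κ] (M : ι → κ → Set S) :
    ProperBlockMatrix M ↔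
      ¬ ∃ (a a' : ι) (b b' : κ), a ≠ a' ∧ b ≠ b' ∧
        (M a b).Nonempty ∧ (M a b').Nonempty ∧ (M a' b).Nonempty ∧ ¬ (M a' b').Nonempty :=
  stmt_0_general M
end

section
/- If a constraint R(u⃗) over a finite domain D is blockwise decomposable, then for every subset Y of its scope the projection π_Y R(u⃗) is blockwise decomposable; and for every variable z in the scope and every S ⊆ D, the selection R(u⃗)|_{z∈S} is blockwise decomposable. -/
/-- Projection of a constraint (a set of assignments `V → D`) onto a set `Y` of
variables: the set of restrictions of solutions to `Y`. -/
def proj {V D : Type*} (Y : Set V) (R : Set (V → D)) : Set (Y → D) :=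
  {g | ∃ f ∈ R, ∀ y : Y, f y = g y}

/-- A constraint is decomposable with respect to the partition `(P, Pᶜ)` of its scope
if it is the product of its projections onto `P` and `Pᶜ`. -/
def Decomp {V D : Type*} (R : Set (V → D)) (P : Set V) : Prop :=
  ∀ f : V → D,
    f ∈ R ↔ ((fun v : P => f v) ∈ proj P R ∧ (fun v : ↥(Pᶜ) => f v) ∈ proj Pᶜ R)

/-- `R` is blockwise decomposable in the pair of variables `x, y`: the selection
matrix `M^R_{x,y}` is a proper block matrix (blocks `(A ℓ, B ℓ)`), and each block
restriction of `R` decomposes as a product over a partition separating `x` from `y`. -/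
def BlockwiseIn {V D : Type*} (R : Set (V → D)) (x y : V) : Prop :=
  ∃ (k : ℕ) (A B : Fin k → Set D),
    (∀ i j, i ≠ j → Disjoint (A i) (A j)) ∧
    (∀ i j, i ≠ j → Disjoint (B i) (B j)) ∧
    (∀ a b : D, (∃ f ∈ R, f x = a ∧ f y = b) ↔ ∃ ℓ, a ∈ A ℓ ∧ b ∈ B ℓ) ∧
    (∀ ℓ, ∃ P : Set V, x ∈ P ∧ y ∉ P ∧ Decomp {f ∈ R | f x ∈ A ℓ ∧ f y ∈ B ℓ} P)

/-- `R` is blockwise decomposable: blockwise decomposable in every pair of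
distinct scope variables. -/
def Blockwise {V D : Type*} (R : Set (V → D)) : Prop :=
  ∀ x y : V, x ≠ y → BlockwiseIn R x y

/-!
A constraint decomposes along `(P, Pᶜ)` exactly when it is closed under gluing two of its
solutions along `P`. This gluing property survives selections (the glued assignment takes its
`z`-value from one of the two solutions) and projections (glue the extending solutions), so every
block restriction stays decomposable. Projection leaves the selection matrix of a pair in the
projected scope, and hence its blocks, unchanged. After a selection, shrink each block `(A, B)` to
the values actually taken by `x`, respectively `y`, on the selected solutions in that block;
gluing a solution with a given `x`-value to one with a given `y`-value shows that every pair
in the shrunken block still occurs.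
-/

section

variable {V D : Type*}

lemma mem_proj_iff {Y : Set V} {R : Set (V → D)} {g : Y → D} :
    g ∈ proj Y R ↔ ∃ f ∈ R, Y.domRestrict f = g := by
  simp only [proj, Set.mem_ofPred_eq, funext_iff, Set.domRestrict_apply]

lemma exists_mem_proj_iff {Y : Set V} {R : Set (V → D)} {q : (Y → D) → Prop} :
    (∃ g ∈ proj Y R, q g) ↔ ∃ f ∈ R, q (Y.domRestrict f) := by
  simp only [mem_proj_iff]
  constructor
  · rintro ⟨_, ⟨f, hf, rfl⟩, hq⟩
    exact ⟨f, hf, hq⟩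
  · rintro ⟨f, hf, hq⟩
    exact ⟨_, ⟨f, hf, rfl⟩, hq⟩

lemma sep_proj_eq {Y : Set V} {R : Set (V → D)} {q : (Y → D) → Prop} :
    {g ∈ proj Y R | q g} = proj Y {f ∈ R | q (Y.domRestrict f)} := by
  ext g
  simp only [Set.mem_ofPred_eq, mem_proj_iff]
  constructor
  · rintro ⟨⟨f, hf, rfl⟩, hq⟩
    exact ⟨f, ⟨hf, hq⟩, rfl⟩
  · rintro ⟨f, ⟨hf, hq⟩, rfl⟩
    exact ⟨⟨f, hf, rfl⟩, hq⟩

lemma decomp_iff_piecewise_mem {R : Set (V → D)} {P : Set V} [∀ v, Decidable (v ∈ P)] :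
    Decomp R P ↔ ∀ f₁ ∈ R, ∀ f₂ ∈ R, P.piecewise f₁ f₂ ∈ R := by
  constructor
  · intro hD f₁ h₁ f₂ h₂
    refine (hD _).mpr ⟨⟨f₁, h₁, fun v => ?_⟩, ⟨f₂, h₂, fun v => ?_⟩⟩
    · exact (Set.piecewise_eq_of_mem _ _ _ v.2).symm
    · exact (Set.piecewise_eq_of_notMem _ _ _ v.2).symm
  · intro hglue f
    refine ⟨fun hf => ⟨⟨f, hf, fun _ => rfl⟩, ⟨f, hf, fun _ => rfl⟩⟩, ?_⟩
    rintro ⟨⟨f₁, h₁, e₁⟩, ⟨f₂, h₂, e₂⟩⟩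
    convert hglue f₁ h₁ f₂ h₂ using 1
    funext v
    by_cases hv : v ∈ P
    · rw [Set.piecewise_eq_of_mem _ _ _ hv, e₁ ⟨v, hv⟩]
    · rw [Set.piecewise_eq_of_notMem _ _ _ hv, e₂ ⟨v, hv⟩]

lemma Decomp.piecewise_mem {R : Set (V → D)} {P : Set V} [∀ v, Decidable (v ∈ P)]
    (hD : Decomp R P) {f₁ f₂ : V → D} (h₁ : f₁ ∈ R) (h₂ : f₂ ∈ R) :
    P.piecewise f₁ f₂ ∈ R :=
  decomp_iff_piecewise_mem.mp hD f₁ h₁ f₂ h₂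

lemma Decomp.sep {R : Set (V → D)} {P : Set V} (hD : Decomp R P) (z : V) (S : Set D) :
    Decomp {f ∈ R | f z ∈ S} P := by
  classical
  refine decomp_iff_piecewise_mem.mpr fun f₁ h₁ f₂ h₂ => ⟨hD.piecewise_mem h₁.1 h₂.1, ?_⟩
  by_cases hz : z ∈ P
  · simpa only [Set.piecewise_eq_of_mem _ _ _ hz] using h₁.2
  · simpa only [Set.piecewise_eq_of_notMem _ _ _ hz] using h₂.2

lemma Decomp.proj {R : Set (V → D)} {P : Set V} (hD : Decomp R P) (Y : Set V) :
    Decomp (proj Y R) {v : Y | (v : V) ∈ P} := by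
  classical
  refine decomp_iff_piecewise_mem.mpr fun g₁ h₁ g₂ h₂ => ?_
  obtain ⟨f₁, hf₁, rfl⟩ := mem_proj_iff.mp h₁
  obtain ⟨f₂, hf₂, rfl⟩ := mem_proj_iff.mp h₂
  refine mem_proj_iff.mpr ⟨P.piecewise f₁ f₂, hD.piecewise_mem hf₁ hf₂, funext fun v => ?_⟩
  by_cases hv : (v : V) ∈ P <;> simp [Set.piecewise, hv]

lemma BlockwiseIn.proj {R : Set (V → D)} {Y : Set V} {x y : Y}
    (h : BlockwiseIn R x y) : BlockwiseIn (proj Y R) x y := by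
  obtain ⟨k, A, B, hA, hB, hM, hP⟩ := h
  refine ⟨k, A, B, hA, hB, fun a b => exists_mem_proj_iff.trans (hM a b), fun ℓ => ?_⟩
  obtain ⟨P, hxP, hyP, hD⟩ := hP ℓ
  refine ⟨{v : Y | (v : V) ∈ P}, hxP, hyP, ?_⟩
  rw [sep_proj_eq]
  exact hD.proj Y

lemma BlockwiseIn.sep {R : Set (V → D)} {x y : V} (h : BlockwiseIn R x y) (z : V) (S : Set D) :
    BlockwiseIn {f ∈ R | f z ∈ S} x y := by
  classical
  obtain ⟨k, A, B, hA, hB, hM, hP⟩ := h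
  choose P hxP hyP hD using hP
  set block : Fin k → Set (V → D) := fun ℓ => {f ∈ {f ∈ R | f x ∈ A ℓ ∧ f y ∈ B ℓ} | f z ∈ S}
  have hA' : ∀ ℓ, (fun f => f x) '' block ℓ ⊆ A ℓ := by
    rintro ℓ _ ⟨f, hf, rfl⟩
    exact hf.1.2.1
  have hB' : ∀ ℓ, (fun f => f y) '' block ℓ ⊆ B ℓ := by
    rintro ℓ _ ⟨f, hf, rfl⟩
    exact hf.1.2.2
  refine ⟨k, fun ℓ => (fun f => f x) '' block ℓ, fun ℓ => (fun f => f y) '' block ℓ,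
    fun i j hij => (hA i j hij).mono (hA' i) (hA' j),
    fun i j hij => (hB i j hij).mono (hB' i) (hB' j), fun a b => ⟨?_, ?_⟩,
    fun ℓ => ⟨P ℓ, hxP ℓ, hyP ℓ, ?_⟩⟩
  · rintro ⟨f, hf, rfl, rfl⟩
    obtain ⟨ℓ, ha, hb⟩ := (hM (f x) (f y)).mp ⟨f, hf.1, rfl, rfl⟩
    have hfℓ : f ∈ block ℓ := ⟨⟨hf.1, ha, hb⟩, hf.2⟩
    exact ⟨ℓ, ⟨f, hfℓ, rfl⟩, ⟨f, hfℓ, rfl⟩⟩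
  · rintro ⟨ℓ, ⟨f₁, h₁, rfl⟩, ⟨f₂, h₂, rfl⟩⟩
    have hglued := ((hD ℓ).sep z S).piecewise_mem h₁ h₂
    refine ⟨(P ℓ).piecewise f₁ f₂, ⟨hglued.1.1, hglued.2⟩, ?_, ?_⟩
    · exact Set.piecewise_eq_of_mem _ _ _ (hxP ℓ)
    · exact Set.piecewise_eq_of_notMem _ _ _ (hyP ℓ)
  · have hblock : {f ∈ {f ∈ R | f z ∈ S} |
        f x ∈ (fun f => f x) '' block ℓ ∧ f y ∈ (fun f => f y) '' block ℓ} = block ℓ := by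
      ext f
      constructor
      · rintro ⟨⟨hf, hz⟩, ha, hb⟩
        exact ⟨⟨hf, hA' ℓ ha, hB' ℓ hb⟩, hz⟩
      · intro hf
        exact ⟨⟨hf.1.1, hf.2⟩, ⟨f, hf, rfl⟩, ⟨f, hf, rfl⟩⟩
    rw [hblock]
    exact (hD ℓ).sep z S

end

theorem stmt_1_general {V D : Type*} (R : Set (V → D))
    (h : Blockwise R) :
    (∀ Y : Set V, Blockwise (proj Y R)) ∧
    (∀ (z : V) (S : Set D), Blockwise {f ∈ R | f z ∈ S}) :=
  ⟨fun _ x y hxy => (h x y (Subtype.coe_injective.ne hxy)).proj,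
    fun z S x y hxy => (h x y hxy).sep z S⟩

theorem stmt_1 {V D : Type*} [Fintype V] [Fintype D] (R : Set (V → D))
    (h : Blockwise R) :
    (∀ Y : Set V, Blockwise (proj Y R)) ∧
    (∀ (z : V) (S : Set D), Blockwise {f ∈ R | f z ∈ S}) :=
  stmt_1_general R h
end

section
/- If a constraint R(x⃗) over a finite domain is blockwise decomposable, then R(x⃗) equals the conjunction of all of its projections onto variable sets of size at most two; that is, an assignment α on the scope of R satisfies R iff for every subset Y of the scope with |Y| ≤ 2, the restriction α|_Y belongs to π_Y(R(x⃗)). -/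
open Set

section

variable {V D : Type*} {R : Set (V → D)}

theorem mem_proj_restrict_iff {Y : Set V} {α : V → D} :
    (fun y : Y => α y) ∈ proj Y R ↔ ∃ f ∈ R, EqOn f α Y :=
  ⟨fun ⟨f, hf, hfα⟩ => ⟨f, hf, fun y hy => hfα ⟨y, hy⟩⟩,
    fun ⟨f, hf, hfα⟩ => ⟨f, hf, fun y => hfα y.2⟩⟩

theorem Decomp.exists_mem_eqOn_eqOn_compl {P : Set V} (hR : Decomp R P) {f g : V → D}
    (hf : f ∈ R) (hg : g ∈ R) : ∃ u ∈ R, EqOn u f P ∧ EqOn u g Pᶜ := by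
  classical
  refine ⟨P.piecewise f g, (hR _).2 ⟨⟨f, hf, fun v => ?_⟩, ⟨g, hg, fun v => ?_⟩⟩,
    fun v hv => piecewise_eq_of_mem _ _ _ hv, fun v hv => piecewise_eq_of_notMem _ _ _ hv⟩
  · exact (piecewise_eq_of_mem _ _ _ v.2).symm
  · exact (piecewise_eq_of_notMem _ _ _ v.2).symm

theorem eq_of_mem_of_disjoint {ι α : Type*} {A : ι → Set α}
    (hA : ∀ i j, i ≠ j → Disjoint (A i) (A j)) {a : α} {i j : ι} (hi : a ∈ A i)
    (hj : a ∈ A j) : i = j := by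
  by_contra hij
  exact disjoint_left.1 (hA i j hij) hi hj

theorem BlockwiseIn.exists_mem_eqOn_eqOn_compl {x y : V} (h : BlockwiseIn R x y)
    {f g : V → D} (hf : f ∈ R) (hg : g ∈ R) (hfg : ∃ w ∈ R, w x = f x ∧ w y = g y) :
    ∃ P : Set V, x ∈ P ∧ y ∉ P ∧ ∃ u ∈ R, EqOn u f P ∧ EqOn u g Pᶜ := by
  obtain ⟨k, A, B, hA, hB, hblock, hdecomp⟩ := h
  obtain ⟨ℓ, hfxA, hgyB⟩ := (hblock _ _).1 hfg
  obtain ⟨ℓf, hfA, hfB⟩ := (hblock (f x) (f y)).1 ⟨f, hf, rfl, rfl⟩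
  obtain ⟨ℓg, hgA, hgB⟩ := (hblock (g x) (g y)).1 ⟨g, hg, rfl, rfl⟩
  obtain rfl : ℓf = ℓ := eq_of_mem_of_disjoint hA hfA hfxA
  obtain rfl : ℓg = ℓf := eq_of_mem_of_disjoint hB hgB hgyB
  obtain ⟨P, hxP, hyP, hP⟩ := hdecomp ℓg
  obtain ⟨u, hu, huf, hug⟩ := hP.exists_mem_eqOn_eqOn_compl ⟨hf, hfA, hfB⟩ ⟨hg, hgA, hgB⟩
  exact ⟨P, hxP, hyP, u, hu.1, huf, hug⟩

theorem Blockwise.exists_mem_eqOn (h : Blockwise R) {α : V → D}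
    (hα : ∀ Y : Set V, Y.ncard ≤ 2 → ∃ f ∈ R, EqOn f α Y) (S : Finset V) :
    ∃ f ∈ R, EqOn f α S := by
  classical
  induction S using Finset.strongInduction with
  | H S ih =>
    by_cases hS : S.card ≤ 2
    · exact hα S (by rwa [ncard_coe_finset])
    obtain ⟨x, hx, y, hy, hxy⟩ := Finset.one_lt_card.1 (by omega : 1 < S.card)
    obtain ⟨f, hf, hfα⟩ := ih (S.erase y) (Finset.erase_ssubset hy)
    obtain ⟨g, hg, hgα⟩ := ih (S.erase x) (Finset.erase_ssubset hx)
    obtain ⟨w, hw, hwα⟩ := hα {x, y} (ncard_pair hxy).le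
    have hwf : w x = f x := by
      rw [hwα (mem_insert x _), hfα (Finset.mem_erase.2 ⟨hxy, hx⟩)]
    have hwg : w y = g y := by
      rw [hwα (mem_insert_of_mem x rfl), hgα (Finset.mem_erase.2 ⟨hxy.symm, hy⟩)]
    obtain ⟨P, hxP, hyP, u, hu, huf, hug⟩ :=
      (h x y hxy).exists_mem_eqOn_eqOn_compl hf hg ⟨w, hw, hwf, hwg⟩
    refine ⟨u, hu, fun v hv => ?_⟩
    by_cases hvP : v ∈ P
    · rw [huf hvP]
      exact hfα (Finset.mem_erase.2 ⟨ne_of_mem_of_not_mem hvP hyP, hv⟩)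
    · rw [hug hvP]
      exact hgα (Finset.mem_erase.2 ⟨(ne_of_mem_of_not_mem hxP hvP).symm, hv⟩)

end

theorem stmt_2_general {V D : Type*} [Fintype V] (R : Set (V → D))
    (h : Blockwise R) :
    ∀ α : V → D, α ∈ R ↔ ∀ Y : Set V, Y.ncard ≤ 2 → (fun y : Y => α y) ∈ proj Y R := by
  intro α
  simp only [mem_proj_restrict_iff]
  refine ⟨fun hα _ _ => ⟨α, hα, eqOn_refl α _⟩, fun hα => ?_⟩
  obtain ⟨f, hf, hfα⟩ := h.exists_mem_eqOn hα Finset.univ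
  rw [Finset.coe_univ, eqOn_univ] at hfα
  exact hfα ▸ hf

theorem stmt_2 {V D : Type*} [Fintype V] [Fintype D] (R : Set (V → D))
    (h : Blockwise R) :
    ∀ α : V → D, α ∈ R ↔ ∀ Y : Set V, Y.ncard ≤ 2 → (fun y : Y => α y) ∈ proj Y R :=
  stmt_2_general R h
end

section
/- Let R(u⃗) be a constraint over finite domain D that is uniformly blockwise decomposable in variables x and y. Then there exists a partition of the scope ũ into {x,y}, ṽ, and w̃ such that R(u⃗) equals the conjunction π_{{x}∪ṽ}(R) ∧ π_{{y}∪w̃}(R) ∧ π_{{x,y}}(R); i.e., an assignment α on ũ is a solution of R iff its restrictions to {x}∪ṽ, {y}∪w̃, and {x,y} belong to the respective projections. -/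
/-- `R` is uniformly blockwise decomposable in `x, y`: the selection matrix is a
proper block matrix and a single partition `(P, Pᶜ)` with `x ∈ P`, `y ∉ P`
decomposes every block restriction. -/
def UniformBlockwiseIn {V D : Type*} (R : Set (V → D)) (x y : V) : Prop :=
  ∃ (k : ℕ) (A B : Fin k → Set D),
    (∀ i j, i ≠ j → Disjoint (A i) (A j)) ∧
    (∀ i j, i ≠ j → Disjoint (B i) (B j)) ∧
    (∀ a b : D, (∃ f ∈ R, f x = a ∧ f y = b) ↔ ∃ ℓ, a ∈ A ℓ ∧ b ∈ B ℓ) ∧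
    (∃ P : Set V, x ∈ P ∧ y ∉ P ∧
      ∀ ℓ, Decomp {f ∈ R | f x ∈ A ℓ ∧ f y ∈ B ℓ} P)


/-!
Take `ṽ = P ∖ {x, y}` and `w̃ = Pᶜ ∖ {x, y}` for the uniform partition `(P, Pᶜ)`. If the
restrictions of `α` to `{x} ∪ ṽ`, `{y} ∪ w̃` and `{x, y}` extend to solutions `f₁`, `f₂`, `f₃`,
then `f₃` puts `(α x, α y)` in some block `ℓ`. As the row sets `Aᵢ` are disjoint and
`f₁ x = α x`, the solution `f₁` lies in block `ℓ` too, and so does `f₂` through the disjoint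
column sets `Bᵢ`. The block restriction is the product of its projections onto `P` and `Pᶜ`,
so `α`, which agrees with `f₁` on `P` and with `f₂` on `Pᶜ`, is a solution of that block.
-/

open Set Function

lemma mem_proj_iff_exists_eqOn {V D : Type*} {Y : Set V} {R : Set (V → D)} {α : V → D} :
    (fun v : Y => α v) ∈ proj Y R ↔ ∃ f ∈ R, EqOn f α Y :=
  ⟨fun ⟨f, hf, hfα⟩ => ⟨f, hf, fun v hv => hfα ⟨v, hv⟩⟩,
    fun ⟨f, hf, hfα⟩ => ⟨f, hf, fun v => hfα v.2⟩⟩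

lemma Decomp.mem_of_eqOn {V D : Type*} {S : Set (V → D)} {P : Set V} (hS : Decomp S P)
    {α f g : V → D} (hf : f ∈ S) (hg : g ∈ S) (hfα : EqOn f α P) (hgα : EqOn g α Pᶜ) :
    α ∈ S :=
  (hS α).2
    ⟨mem_proj_iff_exists_eqOn.2 ⟨f, hf, hfα⟩, mem_proj_iff_exists_eqOn.2 ⟨g, hg, hgα⟩⟩

lemma mem_of_mem_of_pairwise_disjoint {ι α β : Type*} {A : ι → Set α} {B : ι → Set β}
    (hA : Pairwise (Disjoint on A)) {a : α} {b : β} {ℓ : ι} (ha : a ∈ A ℓ)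
    (hab : ∃ i, a ∈ A i ∧ b ∈ B i) : b ∈ B ℓ := by
  obtain ⟨i, hai, hbi⟩ := hab
  rwa [← hA.eq (not_disjoint_iff.2 ⟨a, hai, ha⟩)]

lemma subset_insert_diff_pair {V : Type*} {s : Set V} {x y : V} (hy : y ∉ s) :
    s ⊆ insert x (s \ {x, y}) := by
  intro v hv
  rcases eq_or_ne v x with rfl | hvx
  · exact mem_insert v _
  · exact mem_insert_of_mem x ⟨hv, by rintro (rfl | rfl) <;> simp_all⟩

theorem stmt_4_general {V D : Type*} (R : Set (V → D)) (x y : V)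
    (h : UniformBlockwiseIn R x y) :
    ∃ Vs Ws : Set V,
      x ∉ Vs ∧ y ∉ Vs ∧ x ∉ Ws ∧ y ∉ Ws ∧ Disjoint Vs Ws ∧
      ({x, y} ∪ Vs ∪ Ws = (Set.univ : Set V)) ∧
      ∀ α : V → D, α ∈ R ↔
        ((fun v : ↥(insert x Vs) => α v) ∈ proj (insert x Vs) R ∧
         (fun v : ↥(insert y Ws) => α v) ∈ proj (insert y Ws) R ∧
         (fun v : ↥({x, y} : Set V) => α v) ∈ proj {x, y} R) := by
  obtain ⟨k, A, B, hA, hB, hmat, P, hxP, hyP, hdec⟩ := h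
  have hblock : ∀ f ∈ R, ∃ ℓ, f x ∈ A ℓ ∧ f y ∈ B ℓ :=
    fun f hf => (hmat _ _).1 ⟨f, hf, rfl, rfl⟩
  refine ⟨P \ {x, y}, Pᶜ \ {x, y}, by simp, by simp, by simp, by simp,
    disjoint_compl_right.mono sdiff_subset sdiff_subset, ?_, fun α => ⟨fun hα => ?_, ?_⟩⟩
  · rw [union_assoc, ← union_sdiff_distrib, union_compl_self, union_sdiff_self, union_univ]
  · simp only [mem_proj_iff_exists_eqOn]
    exact ⟨⟨α, hα, eqOn_refl _ _⟩, ⟨α, hα, eqOn_refl _ _⟩, ⟨α, hα, eqOn_refl _ _⟩⟩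
  simp only [mem_proj_iff_exists_eqOn]
  rintro ⟨⟨f₁, hf₁, hf₁α⟩, ⟨f₂, hf₂, hf₂α⟩, ⟨f₃, hf₃, hf₃α⟩⟩
  obtain ⟨ℓ, hxℓ, hyℓ⟩ :=
    (hmat (α x) (α y)).1 ⟨f₃, hf₃, hf₃α (by simp), hf₃α (by simp)⟩
  replace hf₁α : EqOn f₁ α P := hf₁α.mono (subset_insert_diff_pair hyP)
  replace hf₂α : EqOn f₂ α Pᶜ :=
    hf₂α.mono (pair_comm x y ▸ subset_insert_diff_pair (not_not_intro hxP))
  have hf₁x : f₁ x ∈ A ℓ := hf₁α hxP ▸ hxℓ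
  have hf₂y : f₂ y ∈ B ℓ := hf₂α hyP ▸ hyℓ
  have hf₁ℓ : f₁ ∈ {f ∈ R | f x ∈ A ℓ ∧ f y ∈ B ℓ} :=
    ⟨hf₁, hf₁x, mem_of_mem_of_pairwise_disjoint (fun i j => hA i j) hf₁x
      (hblock f₁ hf₁)⟩
  have hf₂ℓ : f₂ ∈ {f ∈ R | f x ∈ A ℓ ∧ f y ∈ B ℓ} :=
    ⟨hf₂, mem_of_mem_of_pairwise_disjoint (fun i j => hB i j) hf₂y
      ((hblock f₂ hf₂).imp fun _ => And.symm), hf₂y⟩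
  exact ((hdec ℓ).mem_of_eqOn hf₁ℓ hf₂ℓ hf₁α hf₂α).1

theorem stmt_4 {V D : Type*} [Fintype V] [Fintype D] (R : Set (V → D)) (x y : V)
    (hxy : x ≠ y) (h : UniformBlockwiseIn R x y) :
    ∃ Vs Ws : Set V,
      x ∉ Vs ∧ y ∉ Vs ∧ x ∉ Ws ∧ y ∉ Ws ∧ Disjoint Vs Ws ∧
      ({x, y} ∪ Vs ∪ Ws = (Set.univ : Set V)) ∧
      ∀ α : V → D, α ∈ R ↔
        ((fun v : ↥(insert x Vs) => α v) ∈ proj (insert x Vs) R ∧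
         (fun v : ↥(insert y Ws) => α v) ∈ proj (insert y Ws) R ∧
         (fun v : ↥({x, y} : Set V) => α v) ∈ proj {x, y} R) :=
  stmt_4_general R x y h
end

section
/- Let C = R(x, y, z⃗) be a constraint over finite domain D, and suppose there are two solutions a, b of C such that for every partition (z̃₁, z̃₂) of the remaining variables z̃, either the combined assignment a|_{{x}∪z̃₁} ∪ b|_{{y}∪z̃₂} is not a solution of C or a|_{{y}∪z̃₂} ∪ b|_{{x}∪z̃₁} is not a solution of C. Define F_n as the conjunction of n disjoint copies R(x_i, y_i, z⃗_i). Let (X̃, Ỹ) be a partition of the variables of F_n such that for each i, the variables x_i and y_i lie on opposite sides. Then every rectangle cover of the solution set of F_n in which all rectangles respect the partition (X̃, Ỹ) has size at least 2^n. -/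
/-!
Fooling-set argument. For `s : Fin n → Bool` let `g_s` put `a` on copy `i` if `s i` and `b`
otherwise; these `2^n` assignments are solutions of `F_n`. If `g_s` and `g_t` lay in one
rectangle with `s i ≠ t i`, then restricting the two cross combinations along the partition to
copy `i` would give both `combine Q a b ∈ R` and `combine Q b a ∈ R`, where `Q` is the trace of
the partition on copy `i`. Exactly one of `Q`, `Qᶜ` contains `x` and neither contains `y`, so
this contradicts the hypothesis on `a` and `b`. Hence each rectangle contains at most one `g_s`.
-/

open Classical in
/-- Combine two assignments along a partition: take `f` on `P` and `g` off `P`. -/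
noncomputable def combine {X D : Type*} (P : Set X) (f g : X → D) : X → D :=
  fun v => if v ∈ P then f v else g v

/-- A set of assignments is a (combinatorial) rectangle with respect to the partition
`(P, Pᶜ)` iff it is closed under combining two of its members along `P`
(equivalently, it is the product of its two projections). -/
def IsRect {X D : Type*} (P : Set X) (r : Set (X → D)) : Prop :=
  ∀ f ∈ r, ∀ g ∈ r, combine P f g ∈ r

lemma combine_compl {X D : Type*} (P : Set X) (f g : X → D) :
    combine Pᶜ f g = combine P g f := by
  funext v
  by_cases h : v ∈ P <;> simp [combine, h]

lemma combine_slice {ι W D : Type*} (P : Set (ι × W)) (f g : ι × W → D) (i : ι) :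
    (fun w => combine P f g (i, w)) =
      combine {w | (i, w) ∈ P} (fun w => f (i, w)) (fun w => g (i, w)) :=
  rfl

lemma Fintype.card_le_card_of_separated_cover {ι α : Type*} [Fintype ι]
    (𝒞 : Finset (Set α)) (g : ι → α) (hcover : ∀ i, ∃ r ∈ 𝒞, g i ∈ r)
    (hsep : ∀ r ∈ 𝒞, ∀ i j, g i ∈ r → g j ∈ r → i = j) :
    Fintype.card ι ≤ 𝒞.card := by
  choose F hF hgF using hcover
  have hinj : Function.Injective fun i => (⟨F i, hF i⟩ : 𝒞) := fun i j hij => by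
    have hFij : F i = F j := congrArg Subtype.val hij
    exact hsep (F i) (hF i) i j (hgF i) (hFij ▸ hgF j)
  simpa using Fintype.card_le_of_injective _ hinj

section FoolingPair

variable {W D : Type*} {R : Set (W → D)} {x y : W} {a b : W → D}

lemma not_combine_mem_and_combine_swap_mem
    (hfool : ∀ Z₁ : Set W, Z₁ ⊆ {x, y}ᶜ →
      combine ({x} ∪ Z₁) a b ∉ R ∨ combine ({x} ∪ Z₁) b a ∉ R)
    {Q : Set W} (hQ : x ∈ Q ↔ y ∉ Q) :
    ¬(combine Q a b ∈ R ∧ combine Q b a ∈ R) := by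
  have separated : ∀ S : Set W, x ∈ S → y ∉ S →
      combine S a b ∉ R ∨ combine S b a ∉ R := by
    intro S hx hy
    have hZ : S \ {x} ⊆ ({x, y} : Set W)ᶜ := by
      rintro w ⟨hwS, hwx⟩ (rfl | rfl)
      exacts [hwx rfl, hy hwS]
    simpa [Set.union_sdiff_cancel (Set.singleton_subset_iff.2 hx)] using hfool _ hZ
  rw [not_and_or]
  by_cases hx : x ∈ Q
  · exact separated Q hx (hQ.1 hx)
  · have hy : y ∈ Q := not_not.1 (mt hQ.2 hx)
    have hcompl := separated Qᶜ hx (not_not.2 hy)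
    rw [combine_compl, combine_compl] at hcompl
    exact hcompl.symm

def selectCopies {ι : Type*} (a b : W → D) (s : ι → Bool) : ι × W → D :=
  fun p => (if s p.1 then a else b) p.2

lemma selectCopies_mem (ha : a ∈ R) (hb : b ∈ R) {ι : Type*} (s : ι → Bool) (i : ι) :
    (fun w => selectCopies a b s (i, w)) ∈ R := by
  show (if s i then a else b) ∈ R
  split <;> assumption

lemma eq_of_selectCopies_mem_rect
    (hfool : ∀ Z₁ : Set W, Z₁ ⊆ {x, y}ᶜ →
      combine ({x} ∪ Z₁) a b ∉ R ∨ combine ({x} ∪ Z₁) b a ∉ R)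
    {ι : Type*} {P : Set (ι × W)} (hP : ∀ i, ((i, x) ∈ P ↔ (i, y) ∉ P))
    {r : Set (ι × W → D)} (hrect : IsRect P r)
    (hsub : r ⊆ {g | ∀ i, (fun w => g (i, w)) ∈ R}) {s t : ι → Bool}
    (hs : selectCopies a b s ∈ r) (ht : selectCopies a b t ∈ r) : s = t := by
  by_contra hst
  obtain ⟨i, hi⟩ := Function.ne_iff.mp hst
  have hst_i := hsub (hrect _ hs _ ht) i
  have hts_i := hsub (hrect _ ht _ hs) i
  rw [combine_slice] at hst_i hts_i
  apply not_combine_mem_and_combine_swap_mem hfool (Q := {w | (i, w) ∈ P}) (hP i)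
  cases hsi : s i <;> cases hti : t i <;> simp_all [selectCopies]

end FoolingPair

theorem stmt_8_general {W D : Type*} (x y : W)
    (R : Set (W → D)) (a b : W → D) (ha : a ∈ R) (hb : b ∈ R)
    (hfool : ∀ Z₁ : Set W, Z₁ ⊆ {x, y}ᶜ →
      combine ({x} ∪ Z₁) a b ∉ R ∨ combine ({x} ∪ Z₁) b a ∉ R)
    (n : ℕ)
    -- the solution set of `F_n`, the conjunction of `n` disjoint copies of `R`
    (sol : Set (Fin n × W → D))
    (hsol : sol = {g | ∀ i : Fin n, (fun w => g (i, w)) ∈ R})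
    (P : Set (Fin n × W))
    (hP : ∀ i : Fin n, ((i, x) ∈ P ↔ (i, y) ∉ P))
    (𝒞 : Finset (Set (Fin n × W → D)))
    (hrect : ∀ r ∈ 𝒞, IsRect P r ∧ r ⊆ sol)
    (hcover : ∀ g ∈ sol, ∃ r ∈ 𝒞, g ∈ r) :
    2 ^ n ≤ 𝒞.card := by
  subst hsol
  have hsep : ∀ r ∈ 𝒞, ∀ s t, selectCopies a b s ∈ r → selectCopies a b t ∈ r → s = t :=
    fun r hr _ _ => eq_of_selectCopies_mem_rect hfool hP (hrect r hr).1 (hrect r hr).2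
  simpa using Fintype.card_le_card_of_separated_cover 𝒞 (selectCopies a b)
    (fun s => hcover _ (selectCopies_mem ha hb s)) hsep

theorem stmt_8 {W D : Type*} [Fintype W] [Fintype D] (x y : W) (hxy : x ≠ y)
    (R : Set (W → D)) (a b : W → D) (ha : a ∈ R) (hb : b ∈ R)
    (hfool : ∀ Z₁ : Set W, Z₁ ⊆ {x, y}ᶜ →
      combine ({x} ∪ Z₁) a b ∉ R ∨ combine ({x} ∪ Z₁) b a ∉ R)
    (n : ℕ)
    -- the solution set of `F_n`, the conjunction of `n` disjoint copies of `R`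
    (sol : Set (Fin n × W → D))
    (hsol : sol = {g | ∀ i : Fin n, (fun w => g (i, w)) ∈ R})
    (P : Set (Fin n × W))
    (hP : ∀ i : Fin n, ((i, x) ∈ P ↔ (i, y) ∉ P))
    (𝒞 : Finset (Set (Fin n × W → D)))
    (hrect : ∀ r ∈ 𝒞, IsRect P r ∧ r ⊆ sol)
    (hcover : ∀ g ∈ sol, ∃ r ∈ 𝒞, g ∈ r) :
    2 ^ n ≤ 𝒞.card :=
  stmt_8_general x y R a b ha hb hfool n sol hsol P hP 𝒞 hrect hcover
end

section
/- Over the Boolean domain {0,1}, every relation that is pp-definable from the constraint language E = {=, ≠, U_0, U_1} (equality, disequality, and the unary constants) is uniformly blockwise decomposable. -/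
def UniformBlockwise {V D : Type*} (R : Set (V → D)) : Prop :=
  ∀ x y : V, x ≠ y → UniformBlockwiseIn R x y

/-- `R` (with scope `W`) is pp-definable over `E = {=, ≠, U₀, U₁}` on the Boolean
domain: there are auxiliary (existentially projected) variables `U` and sets of
equality atoms, disequality atoms and unary constant atoms whose solution set
projects onto `R`. -/
def PPDefinableOverE {W : Type*} (R : Set (W → Bool)) : Prop :=
  ∃ (U : Type) (_ : Fintype U)
    (Eqs Nes : Set ((W ⊕ U) × (W ⊕ U))) (U₀ U₁ : Set (W ⊕ U)),
    R = {g | ∃ f : W ⊕ U → Bool,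
        ((∀ p ∈ Eqs, f p.1 = f p.2) ∧ (∀ p ∈ Nes, f p.1 ≠ f p.2) ∧
         (∀ v ∈ U₀, f v = false) ∧ (∀ v ∈ U₁, f v = true)) ∧
        ∀ w : W, f (Sum.inl w) = g w}


/-!
Self-dual idempotent operations such as the Boolean minority `a ^^ b ^^ c` and majority
preserve `=`, `≠`, `U₀`, `U₁`, hence every pp-definable `R`. So `R` (if nonempty) is an affine
subspace of `W → Bool` whose space `T` of translations is closed under pointwise `&&`.

Fix `x ≠ y`. If every translation takes equal values at `x` and `y`, then `y` determines `x`
on `R`; the rows `x = a` of the selection matrix are then its blocks, and each block splits off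
`{x}`. Otherwise let `P ∌ y` be the set of variables on which every translation agrees with
`x`. The meet of the translations that are `true` at `x` is the indicator of `P`, so cutting a
translation down to `P` gives a translation, and `R` is closed under gluing two solutions along
`P`. Hence the selection matrix is a single full block and `R` decomposes over `P`.
-/

section Polymorphisms

variable {W : Type*}

def IsPolymorphism (op : Bool → Bool → Bool → Bool) (R : Set (W → Bool)) : Prop :=
  ∀ g₁ ∈ R, ∀ g₂ ∈ R, ∀ g₃ ∈ R, (fun w => op (g₁ w) (g₂ w) (g₃ w)) ∈ R

def minority (a b c : Bool) : Bool := a ^^ b ^^ c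

def majority (a b c : Bool) : Bool := a && b || a && c || b && c

theorem PPDefinableOverE.isPolymorphism {R : Set (W → Bool)} (h : PPDefinableOverE R)
    {op : Bool → Bool → Bool → Bool} (hidem : ∀ a, op a a a = a)
    (hdual : ∀ a b c, op (!a) (!b) (!c) = !op a b c) : IsPolymorphism op R := by
  obtain ⟨U, _, Eqs, Nes, U₀, U₁, rfl⟩ := h
  rintro g₁ ⟨f₁, ⟨e₁, n₁, z₁, o₁⟩, p₁⟩ g₂ ⟨f₂, ⟨e₂, n₂, z₂, o₂⟩, p₂⟩
    g₃ ⟨f₃, ⟨e₃, n₃, z₃, o₃⟩, p₃⟩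
  refine ⟨fun t => op (f₁ t) (f₂ t) (f₃ t), ⟨fun p hp => ?_, fun p hp => ?_, fun v hv => ?_,
    fun v hv => ?_⟩, fun w => ?_⟩
  · simp only [e₁ p hp, e₂ p hp, e₃ p hp]
  · simp only [Bool.eq_not_iff.2 (n₁ p hp), Bool.eq_not_iff.2 (n₂ p hp),
      Bool.eq_not_iff.2 (n₃ p hp), hdual]
    exact Bool.not_ne_self _
  · simp only [z₁ v hv, z₂ v hv, z₃ v hv, hidem]
  · simp only [o₁ v hv, o₂ v hv, o₃ v hv, hidem]
  · simp only [p₁ w, p₂ w, p₃ w]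

end Polymorphisms

section XorStabilizer

variable {W : Type*}

/-- For nonempty `R` closed under minority this is `R ^^ r` for any `r ∈ R`: the linear
space parallel to the affine space `R`. -/
def xorStabilizer (R : Set (W → Bool)) : Set (W → Bool) :=
  {d | ∀ g ∈ R, (fun w => g w ^^ d w) ∈ R}

variable {R : Set (W → Bool)}

theorem bot_mem_xorStabilizer : ⊥ ∈ xorStabilizer R := fun g hg => by
  simpa using hg

theorem xor_mem_xorStabilizer {d₁ d₂ : W → Bool} (h₁ : d₁ ∈ xorStabilizer R)
    (h₂ : d₂ ∈ xorStabilizer R) : (fun w => d₁ w ^^ d₂ w) ∈ xorStabilizer R := fun g hg => by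
  simpa only [Bool.xor_assoc] using h₂ _ (h₁ g hg)

theorem IsPolymorphism.xor_mem_xorStabilizer_of_mem (hmin : IsPolymorphism minority R)
    {g₁ g₂ : W → Bool} (h₁ : g₁ ∈ R) (h₂ : g₂ ∈ R) :
    (fun w => g₁ w ^^ g₂ w) ∈ xorStabilizer R := fun g hg => by
  convert hmin g hg g₁ h₁ g₂ h₂ using 1
  simp only [minority, Bool.xor_assoc]

theorem IsPolymorphism.inf_mem_xorStabilizer (hmaj : IsPolymorphism majority R)
    {d₁ d₂ : W → Bool} (h₁ : d₁ ∈ xorStabilizer R) (h₂ : d₂ ∈ xorStabilizer R) :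
    d₁ ⊓ d₂ ∈ xorStabilizer R := fun g hg => by
  convert hmaj _ (h₁ g hg) _ (h₂ g hg) g hg using 1
  funext w
  simp only [Pi.inf_apply, majority]
  cases g w <;> cases d₁ w <;> cases d₂ w <;> decide

end XorStabilizer

section LinkClass

variable {W : Type*}

def linkClass (T : Set (W → Bool)) (x : W) : Set W :=
  {v | ∀ t ∈ T, t x = t v}

theorem self_mem_linkClass (T : Set (W → Bool)) (x : W) : x ∈ linkClass T x := fun _ _ => rfl

variable [Finite W] {T : Set (W → Bool)}
  (hxor : ∀ a ∈ T, ∀ b ∈ T, (fun v => a v ^^ b v) ∈ T) (hinf : ∀ a ∈ T, ∀ b ∈ T, a ⊓ b ∈ T)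
include hxor hinf

theorem exists_indicator_linkClass {x : W} (hx : ∃ t ∈ T, t x = true) :
    ∃ m ∈ T, ∀ v, m v = true ↔ v ∈ linkClass T x := by
  obtain ⟨t₀, ht₀, ht₀x⟩ := hx
  set S := (Set.toFinite {t ∈ T | t x = true}).toFinset
  have hS : S.Nonempty := ⟨t₀, by simp [S, ht₀, ht₀x]⟩
  set m := S.inf' hS id
  have hm : ∀ v, m v = true ↔ ∀ t ∈ T, t x = true → t v = true := by
    intro v
    change _ = (⊤ : Bool) ↔ ∀ t ∈ T, t x = true → t v = ⊤
    simp only [m, S, Finset.inf'_apply, ← top_le_iff, Finset.le_inf'_iff, id,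
      Set.Finite.mem_toFinset, Set.mem_ofPred_eq, and_imp]
  have hmT : m ∈ T :=
    Finset.inf'_induction hS id hinf fun t ht => ((Set.Finite.mem_toFinset _).1 ht).1
  have hmx : m x = true := (hm x).2 fun _ _ h => h
  refine ⟨m, hmT, fun v => ⟨fun hv t ht => ?_, fun hv => (hm v).2 fun t ht htx => hv t ht ▸ htx⟩⟩
  cases htx : t x
  · have := (hm v).1 hv _ (hxor t ht m hmT) (by simp [htx, hmx])
    simpa [hv] using this
  · exact ((hm v).1 hv t ht htx).symm

theorem piecewise_linkClass_bot_mem (h₀ : ⊥ ∈ T) (x : W) [DecidablePred (· ∈ linkClass T x)]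
    {d : W → Bool} (hd : d ∈ T) : (linkClass T x).piecewise d ⊥ ∈ T := by
  by_cases hx : ∃ t ∈ T, t x = true
  · obtain ⟨m, hmT, hm⟩ := exists_indicator_linkClass hxor hinf hx
    convert hinf d hd m hmT using 1
    funext v
    by_cases hv : v ∈ linkClass T x
    · simp [hv, (hm v).2 hv]
    · simp [hv, (hm v).not.2 hv]
  · push Not at hx
    convert h₀ using 1
    funext v
    by_cases hv : v ∈ linkClass T x
    · simp [hv, ← hv d hd, hx d hd]
    · simp [hv]

end LinkClass

section Decomposition

variable {V D : Type*}

theorem decomp_of_piecewise_mem {S : Set (V → D)} {P : Set V} [DecidablePred (· ∈ P)]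
    (h : ∀ g₁ ∈ S, ∀ g₂ ∈ S, P.piecewise g₁ g₂ ∈ S) : Decomp S P := by
  intro f
  refine ⟨fun hf => ⟨⟨f, hf, fun _ => rfl⟩, ⟨f, hf, fun _ => rfl⟩⟩, ?_⟩
  rintro ⟨⟨g₁, hg₁, h₁⟩, ⟨g₂, hg₂, h₂⟩⟩
  convert h g₁ hg₁ g₂ hg₂ using 1
  funext v
  by_cases hv : v ∈ P
  · rw [Set.piecewise_eq_of_mem _ _ _ hv]; exact (h₁ ⟨v, hv⟩).symm
  · rw [Set.piecewise_eq_of_notMem _ _ _ hv]; exact (h₂ ⟨v, hv⟩).symm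

theorem decomp_singleton_of_forall_eq {S : Set (V → D)} {x : V}
    (h : ∀ g₁ ∈ S, ∀ g₂ ∈ S, g₁ x = g₂ x) : Decomp S {x} := by
  classical
  exact decomp_of_piecewise_mem fun g₁ h₁ g₂ h₂ => by
    rwa [Set.piecewise_singleton, h g₁ h₁ g₂ h₂, Function.update_eq_self]

theorem uniformBlockwiseIn_of_determines [Fintype D] {R : Set (V → D)} {x y : V} (hxy : x ≠ y)
    (hdet : ∀ f ∈ R, ∀ f' ∈ R, f y = f' y → f x = f' x) : UniformBlockwiseIn R x y := by
  let e := Fintype.equivFin D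
  refine ⟨Fintype.card D, fun ℓ => {e.symm ℓ}, fun ℓ => {b | ∃ f ∈ R, f x = e.symm ℓ ∧ f y = b},
    fun i j hij => ?_, fun i j hij => ?_, fun a b => ⟨?_, ?_⟩, {x}, rfl, hxy.symm, fun ℓ => ?_⟩
  · simpa using e.symm.injective.ne hij
  · rw [Set.disjoint_left]
    rintro _ ⟨f, hf, hfx, rfl⟩ ⟨f', hf', hf'x, hy⟩
    exact hij (e.symm.injective (hfx.symm.trans ((hdet f hf f' hf' hy.symm).trans hf'x)))
  · rintro ⟨f, hf, rfl, rfl⟩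
    exact ⟨e (f x), by simp, f, hf, by simp, rfl⟩
  · rintro ⟨ℓ, rfl, f, hf, hfx, rfl⟩
    exact ⟨f, hf, hfx, rfl⟩
  · exact decomp_singleton_of_forall_eq fun g₁ h₁ g₂ h₂ => h₁.2.1.trans h₂.2.1.symm

theorem uniformBlockwiseIn_of_piecewise_mem {R : Set (V → D)} {P : Set V}
    [DecidablePred (· ∈ P)] {x y : V} (hx : x ∈ P) (hy : y ∉ P)
    (h : ∀ g₁ ∈ R, ∀ g₂ ∈ R, P.piecewise g₁ g₂ ∈ R) : UniformBlockwiseIn R x y := by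
  refine ⟨1, fun _ => {a | ∃ f ∈ R, f x = a}, fun _ => {b | ∃ f ∈ R, f y = b},
    fun i j hij => (hij (Subsingleton.elim i j)).elim,
    fun i j hij => (hij (Subsingleton.elim i j)).elim,
    fun a b => ⟨?_, ?_⟩, P, hx, hy, fun _ => decomp_of_piecewise_mem ?_⟩
  · rintro ⟨f, hf, rfl, rfl⟩
    exact ⟨0, ⟨f, hf, rfl⟩, f, hf, rfl⟩
  · rintro ⟨-, ⟨f₁, hf₁, rfl⟩, f₂, hf₂, rfl⟩
    exact ⟨_, h f₁ hf₁ f₂ hf₂, Set.piecewise_eq_of_mem _ _ _ hx,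
      Set.piecewise_eq_of_notMem _ _ _ hy⟩
  · rintro g₁ ⟨h₁, hx₁, -⟩ g₂ ⟨h₂, -, hy₂⟩
    exact ⟨h g₁ h₁ g₂ h₂, by rwa [Set.piecewise_eq_of_mem _ _ _ hx],
      by rwa [Set.piecewise_eq_of_notMem _ _ _ hy]⟩

end Decomposition

section Boolean

variable {W : Type*} {R : Set (W → Bool)}

theorem IsPolymorphism.eq_of_mem_linkClass (hmin : IsPolymorphism minority R) {x y : W}
    (hy : y ∈ linkClass (xorStabilizer R) x) :
    ∀ f ∈ R, ∀ f' ∈ R, f y = f' y → f x = f' x := by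
  intro f hf f' hf' hyy
  simpa [hyy] using hy _ (hmin.xor_mem_xorStabilizer_of_mem hf hf')

/-- `g₁` glued to `g₂` along the class of `x` is `g₂ ^^ (g₁ ^^ g₂)` with the translation
`g₁ ^^ g₂` cut down to that class. -/
theorem IsPolymorphism.piecewise_linkClass_mem [Finite W] (hmin : IsPolymorphism minority R)
    (hmaj : IsPolymorphism majority R) (x : W)
    [DecidablePred (· ∈ linkClass (xorStabilizer R) x)] {g₁ g₂ : W → Bool}
    (h₁ : g₁ ∈ R) (h₂ : g₂ ∈ R) : (linkClass (xorStabilizer R) x).piecewise g₁ g₂ ∈ R := by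
  have hd := piecewise_linkClass_bot_mem (fun _ ha _ hb => xor_mem_xorStabilizer ha hb)
    (fun _ ha _ hb => hmaj.inf_mem_xorStabilizer ha hb) bot_mem_xorStabilizer x
    (hmin.xor_mem_xorStabilizer_of_mem h₁ h₂)
  convert hd g₂ h₂ using 1
  funext v
  by_cases hv : v ∈ linkClass (xorStabilizer R) x <;> simp [hv, Bool.xor_left_comm]

end Boolean

theorem stmt_11 {W : Type*} [Fintype W] (R : Set (W → Bool))
    (h : PPDefinableOverE R) : UniformBlockwise R := by
  have hmin := h.isPolymorphism (op := minority) (by decide) (by decide)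
  have hmaj := h.isPolymorphism (op := majority) (by decide) (by decide)
  intro x y hxy
  classical
  by_cases hy : y ∈ linkClass (xorStabilizer R) x
  · exact uniformBlockwiseIn_of_determines hxy (hmin.eq_of_mem_linkClass hy)
  · exact uniformBlockwiseIn_of_piecewise_mem (self_mem_linkClass _ x) hy
      fun _ h₁ _ h₂ => hmin.piecewise_linkClass_mem hmaj x h₁ h₂
end

section
/- Over the Boolean domain, if an indecomposable constraint R(x⃗) with at least two variables is blockwise decomposable, then R has exactly two solutions, these two solutions differ in every variable, and consequently R is expressible as a conjunction of binary equality and disequality constraints. -/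
/-
Fix two variables `x ≠ y`. If all of `R` lay in one block of the selection matrix `M^R_{x,y}`,
the block restriction would be `R` itself and would decompose, so `R` meets at least two blocks.
Since the blocks have pairwise disjoint rows and columns and the domain has only two values,
two solutions of `R` agree at `x` iff they agree at `y`. Hence any two solutions agree everywhere
or nowhere. A constraint with at most one solution decomposes, so `R` has two solutions, which
are then `f` and `!f`. The pair `{f, !f}` is cut out by the equalities and disequalities that
`f` satisfies.
-/

open Function

def Indecomposable {V D : Type*} (R : Set (V → D)) : Prop :=
  ¬ ∃ P : Set V, P.Nonempty ∧ P ≠ Set.univ ∧ Decomp R P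

lemma decomp_of_subsingleton {V D : Type*} {R : Set (V → D)} (hR : R.Subsingleton)
    (P : Set V) : Decomp R P := by
  intro f
  refine ⟨fun hf => ⟨⟨f, hf, fun _ => rfl⟩, ⟨f, hf, fun _ => rfl⟩⟩, ?_⟩
  rintro ⟨⟨g, hg, hgf⟩, ⟨g', hg', hg'f⟩⟩
  obtain rfl := hR hg hg'
  convert hg using 1
  funext v
  by_cases hv : v ∈ P
  · exact (hgf ⟨v, hv⟩).symm
  · exact (hg'f ⟨v, hv⟩).symm

namespace Indecomposable

variable {V D : Type*} {R : Set (V → D)}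

lemma nontrivial [Nontrivial V] (hR : Indecomposable R) : R.Nontrivial := by
  obtain ⟨x, y, hxy⟩ := exists_pair_ne V
  refine Set.not_subsingleton_iff.mp fun hsub => hR ⟨{x}, Set.singleton_nonempty x, ?_,
    decomp_of_subsingleton hsub _⟩
  exact fun h => hxy (Set.mem_singleton_iff.mp (h ▸ Set.mem_univ y)).symm

lemma exists_not_of_decomp_sep (hR : Indecomposable R) {p : (V → D) → Prop} {P : Set V}
    {x y : V} (hx : x ∈ P) (hy : y ∉ P) (hdec : Decomp {f ∈ R | p f} P) :
    ∃ f ∈ R, ¬ p f := by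
  by_contra! hall
  have hsub : {f ∈ R | p f} = R := Set.sep_eq_self_iff_mem_true.mpr hall
  exact hR ⟨P, ⟨x, hx⟩, fun h => hy (h ▸ Set.mem_univ y), hsub ▸ hdec⟩

end Indecomposable

/-- The columns of another block take up one of the two values, leaving one for the block
of `a`. -/
lemma Bool.eq_of_mem_blocks {ι : Type*} {A B : ι → Set Bool}
    (hA : Pairwise (Disjoint on A)) (hB : Pairwise (Disjoint on B))
    (hother : ∀ ℓ, ∃ n ≠ ℓ, (B n).Nonempty) {ℓ m : ι} {a b b' : Bool}
    (ha : a ∈ A ℓ) (hb : b ∈ B ℓ) (ha' : a ∈ A m) (hb' : b' ∈ B m) : b = b' := by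
  obtain rfl : ℓ = m := by
    by_contra hne
    exact Set.disjoint_left.mp (hA hne) ha ha'
  obtain ⟨n, hn, d, hd⟩ := hother ℓ
  have hdb : d ≠ b := fun h => Set.disjoint_left.mp (hB hn) hd (h ▸ hb)
  have hdb' : d ≠ b' := fun h => Set.disjoint_left.mp (hB hn) hd (h ▸ hb')
  cases b <;> cases b' <;> cases d <;> simp_all

lemma BlockwiseIn.eq_iff_eq {V : Type*} {R : Set (V → Bool)} {x y : V}
    (hR : Indecomposable R) (hxy : BlockwiseIn R x y) {f g : V → Bool}
    (hf : f ∈ R) (hg : g ∈ R) : f x = g x ↔ f y = g y := by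
  obtain ⟨k, A, B, hA, hB, hsel, hdec⟩ := hxy
  have hother : ∀ ℓ, ∃ n ≠ ℓ, (A n).Nonempty ∧ (B n).Nonempty := by
    intro ℓ
    obtain ⟨P, hxP, hyP, hdecP⟩ := hdec ℓ
    obtain ⟨h, hh, hout⟩ := hR.exists_not_of_decomp_sep hxP hyP hdecP
    obtain ⟨n, hAn, hBn⟩ := (hsel (h x) (h y)).mp ⟨h, hh, rfl, rfl⟩
    exact ⟨n, fun hn => hout (hn ▸ ⟨hAn, hBn⟩), ⟨_, hAn⟩, ⟨_, hBn⟩⟩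
  obtain ⟨ℓ, hfA, hfB⟩ := (hsel (f x) (f y)).mp ⟨f, hf, rfl, rfl⟩
  obtain ⟨m, hgA, hgB⟩ := (hsel (g x) (g y)).mp ⟨g, hg, rfl, rfl⟩
  constructor
  · intro h
    exact Bool.eq_of_mem_blocks hA hB (fun ℓ => (hother ℓ).imp fun _ h => ⟨h.1, h.2.2⟩)
      hfA hfB (h ▸ hgA) hgB
  · intro h
    exact Bool.eq_of_mem_blocks hB hA (fun ℓ => (hother ℓ).imp fun _ h => ⟨h.1, h.2.1⟩)
      hfB hfA (h ▸ hgB) hgA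

lemma Blockwise.eq_or_forall_ne {V : Type*} {R : Set (V → Bool)} (hR : Indecomposable R)
    (hbd : Blockwise R) {f g : V → Bool} (hf : f ∈ R) (hg : g ∈ R) :
    f = g ∨ ∀ v, f v ≠ g v := by
  have hagree : ∀ v w, f v = g v → f w = g w := fun v w h => by
    rcases eq_or_ne v w with rfl | hvw
    · exact h
    · exact ((hbd v w hvw).eq_iff_eq hR hf hg).mp h
  by_cases h : ∃ v, f v = g v
  · obtain ⟨v, hv⟩ := h
    exact Or.inl (funext fun w => hagree v w hv)
  · exact Or.inr (not_exists.mp h)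

lemma Bool.eq_or_eq_not_of_forall_eq_iff {V : Type*} {f h : V → Bool}
    (hfh : ∀ v w, h v = h w ↔ f v = f w) : h = f ∨ h = fun v => !f v := by
  by_cases hagree : ∃ v, h v = f v
  · obtain ⟨v, hv⟩ := hagree
    refine Or.inl (funext fun w => ?_)
    have := hfh w v
    cases hw : h w <;> cases hfw : f w <;> simp_all
  · exact Or.inr (funext fun w => Bool.eq_not_of_ne fun hw => hagree ⟨w, hw⟩)

lemma Bool.pair_not_eq_setOf_eq_ne {V : Type*} (f : V → Bool) :
    ({f, fun v => !f v} : Set (V → Bool)) =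
      {h | (∀ p ∈ {p : V × V | f p.1 = f p.2}, h p.1 = h p.2) ∧
        (∀ p ∈ {p : V × V | f p.1 ≠ f p.2}, h p.1 ≠ h p.2)} := by
  ext h
  simp only [Set.mem_insert_iff, Set.mem_singleton_iff, Set.mem_ofPred_eq, Prod.forall]
  constructor
  · rintro (rfl | rfl)
    · exact ⟨fun _ _ hp => hp, fun _ _ hp => hp⟩
    · exact ⟨fun _ _ hp => by simp [hp], fun _ _ hp => by simpa using hp⟩
  · rintro ⟨heq, hne⟩
    refine Bool.eq_or_eq_not_of_forall_eq_iff fun v w => ⟨fun hh => ?_, heq v w⟩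
    by_contra hf
    exact hne v w hf hh

theorem stmt_12 {V : Type*} [Fintype V] (hV : 2 ≤ Fintype.card V)
    (R : Set (V → Bool))
    (hindec : ¬ ∃ P : Set V, P.Nonempty ∧ P ≠ Set.univ ∧ Decomp R P)
    (hbd : Blockwise R) :
    ∃ f g : V → Bool, f ≠ g ∧ R = {f, g} ∧ (∀ v, f v ≠ g v) ∧
      ∃ Eqs Nes : Set (V × V),
        R = {h | (∀ p ∈ Eqs, h p.1 = h p.2) ∧ (∀ p ∈ Nes, h p.1 ≠ h p.2)} := by
  have : Nontrivial V := Fintype.one_lt_card_iff_nontrivial.mp hV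
  obtain ⟨f, hf, g, hg, hfg⟩ := Indecomposable.nontrivial hindec
  have hdiff := (hbd.eq_or_forall_ne hindec hf hg).resolve_left hfg
  have hg_not : g = fun v => !f v := funext fun v => Bool.eq_not_of_ne (hdiff v).symm
  have hR : R = {f, g} := by
    refine Set.Subset.antisymm (fun h hh => ?_) (Set.pair_subset hf hg)
    refine (hbd.eq_or_forall_ne hindec hh hf).imp id fun hhf => ?_
    exact hg_not ▸ funext fun v => Bool.eq_not_of_ne (hhf v)
  refine ⟨f, g, hfg, hR, hdiff, {p | f p.1 = f p.2}, {p | f p.1 ≠ f p.2}, ?_⟩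
  rw [hR, hg_not]
  exact Bool.pair_not_eq_setOf_eq_ne f
end
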